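/- arXiv:1803.04753 — 2 statements merged into one kernel-verified Lean document; each statement's English description precedes it below -/
import Mathlib

section
/- Let L, compactness, the condition (FG), the submodular function δ, and the descending chain condition (DCC) be as in the context, and assume in addition that δ(x) ≥ 0 for every compact x. Let b ∈ L and let x ≤ b be compact, and set ⌈x⌉ := ⨅{a ∈ L : x ≤ a ≤ b and a is strong in b}. Then ⌈x⌉ is compact, and δ(⌈x⌉) = min{δ(y) : y compact, x ≤ y ≤ b} (in particular this minimum exists). -/
/-!
Among the compact `y` with `x ≤ y ≤ b`, those of least `δ`-value are closed under meets by
submodularity, and each is strong in everything between it and `b`. A strictly descending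
chain of them is therefore excluded by (DCC), so there is a least minimiser `y₀`. It is strong
in `b`, and it lies below every `a ≥ x` strong in `b`: strength of `a` yields a compact
`x ≤ y' ≤ a` with `δ y' ≤ δ (y₀ ⊔ y')`, and submodularity makes `y₀ ⊓ y'` a minimiser again.
Hence `y₀` is the self-sufficient closure.
-/

open CompleteLattice

/-- `a` is strong (self-sufficient) in `b`: for every compact `x ≤ b` and compact
`y ≤ a` there is a compact `y'` with `y ≤ y' ≤ a` and `δ(x ⊔ y') ≥ δ(y')`
(i.e. the relative predimension `δ(x / a)` is non-negative). -/
def IsStrong {L : Type*} [CompleteLattice L] (δ : L → ℤ) (a b : L) : Prop :=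
  ∀ x, IsCompactElement x → x ≤ b → ∀ y, IsCompactElement y → y ≤ a →
    ∃ y', IsCompactElement y' ∧ y ≤ y' ∧ y' ≤ a ∧ δ y' ≤ δ (x ⊔ y')

theorem IsCompactElement.sup {L : Type*} [CompleteLattice L] {a b : L}
    (ha : IsCompactElement a) (hb : IsCompactElement b) : IsCompactElement (a ⊔ b) := by
  classical
  simpa using isCompactElement_finsetSup {a, b} (f := id) (by simp [ha, hb])

section Minimizer

variable {L : Type*} [CompleteLattice L] {δ : L → ℤ} {x b y : L}

def SubmodularOnCompacts (δ : L → ℤ) : Prop :=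
  ∀ u v : L, IsCompactElement u → IsCompactElement v → δ (u ⊔ v) + δ (u ⊓ v) ≤ δ u + δ v

structure IsMinimizer (δ : L → ℤ) (x b y : L) : Prop where
  isCompactElement : IsCompactElement y
  lower_le : x ≤ y
  le_upper : y ≤ b
  delta_le : ∀ z, IsCompactElement z → x ≤ z → z ≤ b → δ y ≤ δ z

theorem exists_isMinimizer (hpos : ∀ z : L, IsCompactElement z → 0 ≤ δ z)
    (hx : IsCompactElement x) (hxb : x ≤ b) : ∃ y, IsMinimizer δ x b y := by
  obtain ⟨m, ⟨y, hyc, hxy, hyb, rfl⟩, hmin⟩ := Int.exists_least_of_bdd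
    (P := fun m ↦ ∃ y : L, IsCompactElement y ∧ x ≤ y ∧ y ≤ b ∧ δ y = m)
    ⟨0, fun _ ⟨y, hyc, _, _, hy⟩ ↦ hy ▸ hpos y hyc⟩ ⟨δ x, x, hx, le_rfl, hxb, rfl⟩
  exact ⟨y, hyc, hxy, hyb, fun z hzc hxz hzb ↦ hmin _ ⟨z, hzc, hxz, hzb, rfl⟩⟩

theorem IsMinimizer.isStrong {t : L} (hy : IsMinimizer δ x b y) (htb : t ≤ b) :
    IsStrong δ y t :=
  fun _ hzc hzt _ _ hwy ↦ ⟨y, hy.isCompactElement, hwy, le_rfl,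
    hy.delta_le _ (hzc.sup hy.isCompactElement) (hy.lower_le.trans le_sup_right)
      (sup_le (hzt.trans htb) hy.le_upper)⟩

theorem IsMinimizer.inf
    (hFG : IsLowerSet {c : L | IsCompactElement c}) (hsub : SubmodularOnCompacts δ)
    (hy : IsMinimizer δ x b y) {y' : L} (hy'c : IsCompactElement y') (hxy' : x ≤ y')
    (hδ : δ y' ≤ δ (y ⊔ y')) : IsMinimizer δ x b (y ⊓ y') := by
  have hc : IsCompactElement (y ⊓ y') := hFG inf_le_left hy.isCompactElement
  have hle : y ⊓ y' ≤ b := inf_le_left.trans hy.le_upper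
  have := hsub y y' hy.isCompactElement hy'c
  refine ⟨hc, le_inf hy.lower_le hxy', hle, fun z hzc hxz hzb ↦ ?_⟩
  linarith [hy.delta_le z hzc hxz hzb]

theorem IsMinimizer.inf_of_isMinimizer
    (hFG : IsLowerSet {c : L | IsCompactElement c}) (hsub : SubmodularOnCompacts δ)
    (hy : IsMinimizer δ x b y) {y' : L} (hy' : IsMinimizer δ x b y') :
    IsMinimizer δ x b (y ⊓ y') :=
  hy.inf hFG hsub hy'.isCompactElement hy'.lower_le <|
    hy'.delta_le _ (hy.isCompactElement.sup hy'.isCompactElement)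
      (hy'.lower_le.trans le_sup_right) (sup_le hy.le_upper hy'.le_upper)

theorem wellFoundedOn_isMinimizer
    (hDCC : ¬ ∃ c : ℕ → L, (∀ n, IsCompactElement (c n)) ∧ (∀ n, c (n + 1) < c n) ∧
      ∀ n, IsStrong δ (c (n + 1)) (c n)) :
    {y | IsMinimizer δ x b y}.WellFoundedOn (· < ·) := by
  rw [Set.wellFoundedOn_iff_no_descending_seq]
  intro f hf
  have hlt (n : ℕ) : f (n + 1) < f n := f.map_rel_iff.mpr n.lt_succ_self
  exact hDCC ⟨f, fun n ↦ (hf n).isCompactElement, hlt,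
    fun n ↦ (hf (n + 1)).isStrong (hf n).le_upper⟩

theorem exists_isLeast_isMinimizer
    (hFG : IsLowerSet {c : L | IsCompactElement c}) (hsub : SubmodularOnCompacts δ)
    (hDCC : ¬ ∃ c : ℕ → L, (∀ n, IsCompactElement (c n)) ∧ (∀ n, c (n + 1) < c n) ∧
      ∀ n, IsStrong δ (c (n + 1)) (c n))
    (hpos : ∀ z : L, IsCompactElement z → 0 ≤ δ z)
    (hx : IsCompactElement x) (hxb : x ≤ b) :
    ∃ y₀, IsLeast {y | IsMinimizer δ x b y} y₀ := by
  obtain ⟨y₀, hy₀, hmin⟩ := (wellFoundedOn_isMinimizer hDCC).exists_minimal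
    (exists_isMinimizer hpos hx hxb)
  refine ⟨y₀, hy₀, fun y hy ↦ ?_⟩
  have hinf := hy₀.inf_of_isMinimizer hFG hsub hy
  exact (hmin hinf inf_le_left).trans inf_le_right

theorem isLeast_isStrong_of_isLeast_isMinimizer
    (hFG : IsLowerSet {c : L | IsCompactElement c}) (hsub : SubmodularOnCompacts δ)
    (hx : IsCompactElement x) {y₀ : L} (hleast : IsLeast {y | IsMinimizer δ x b y} y₀) :
    IsLeast {a | x ≤ a ∧ a ≤ b ∧ IsStrong δ a b} y₀ := by
  obtain ⟨hy₀, hle⟩ := hleast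
  refine ⟨⟨hy₀.lower_le, hy₀.le_upper, hy₀.isStrong le_rfl⟩, ?_⟩
  rintro a ⟨hxa, -, ha⟩
  obtain ⟨y', hy'c, hxy', hy'a, hδ⟩ := ha y₀ hy₀.isCompactElement hy₀.le_upper x hx hxa
  calc y₀ ≤ y₀ ⊓ y' := hle (hy₀.inf hFG hsub hy'c hxy' (sup_comm y₀ y' ▸ hδ))
    _ ≤ a := inf_le_right.trans hy'a

end Minimizer

theorem selfSufficientClosure_compact_and_min_general {L : Type*} [CompleteLattice L] (δ : L → ℤ)
    (hFG : ∀ x c : L, IsCompactElement c → x ≤ c → IsCompactElement x)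
    (hsub : ∀ x y : L, IsCompactElement x → IsCompactElement y →
      δ (x ⊔ y) + δ (x ⊓ y) ≤ δ x + δ y)
    (hDCC : ¬ ∃ c : ℕ → L, (∀ n, IsCompactElement (c n)) ∧ (∀ n, c (n + 1) < c n) ∧
      ∀ n, IsStrong δ (c (n + 1)) (c n))
    (hpos : ∀ x : L, IsCompactElement x → 0 ≤ δ x)
    (b x : L) (hx : IsCompactElement x) (hxb : x ≤ b) :
    IsCompactElement (sInf {a : L | x ≤ a ∧ a ≤ b ∧ IsStrong δ a b}) ∧
    IsLeast {m : ℤ | ∃ y : L, IsCompactElement y ∧ x ≤ y ∧ y ≤ b ∧ δ y = m}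
      (δ (sInf {a : L | x ≤ a ∧ a ≤ b ∧ IsStrong δ a b})) := by
  have hlower : IsLowerSet {c : L | IsCompactElement c} := fun _ _ hle hc ↦ hFG _ _ hc hle
  obtain ⟨y₀, hleast⟩ := exists_isLeast_isMinimizer hlower hsub hDCC hpos hx hxb
  rw [(isLeast_isStrong_of_isLeast_isMinimizer hlower hsub hx hleast).isGLB.sInf_eq]
  obtain ⟨hc, hxy, hyb, hmin⟩ := hleast.1
  exact ⟨hc, ⟨y₀, hc, hxy, hyb, rfl⟩, fun _ ⟨z, hzc, hxz, hzb, hz⟩ ↦ hz ▸ hmin z hzc hxz hzb⟩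

/-- If `δ` is non-negative, the self-sufficient closure `⌈x⌉_b` of a compact `x ≤ b`
is compact, and `δ(⌈x⌉_b)` is the minimum of `δ(y)` over compact `y` with `x ≤ y ≤ b`. -/
theorem selfSufficientClosure_compact_and_min {L : Type*} [CompleteLattice L] (δ : L → ℤ)
    (hFG : ∀ x c : L, IsCompactElement c → x ≤ c → IsCompactElement x)
    (hbot : δ ⊥ = 0)
    (hsub : ∀ x y : L, IsCompactElement x → IsCompactElement y →
      δ (x ⊔ y) + δ (x ⊓ y) ≤ δ x + δ y)
    (hDCC : ¬ ∃ c : ℕ → L, (∀ n, IsCompactElement (c n)) ∧ (∀ n, c (n + 1) < c n) ∧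
      ∀ n, IsStrong δ (c (n + 1)) (c n))
    (hpos : ∀ x : L, IsCompactElement x → 0 ≤ δ x)
    (b x : L) (hx : IsCompactElement x) (hxb : x ≤ b) :
    IsCompactElement (sInf {a : L | x ≤ a ∧ a ≤ b ∧ IsStrong δ a b}) ∧
    IsLeast {m : ℤ | ∃ y : L, IsCompactElement y ∧ x ≤ y ∧ y ≤ b ∧ δ y = m}
      (δ (sInf {a : L | x ≤ a ∧ a ≤ b ∧ IsStrong δ a b})) :=
  selfSufficientClosure_compact_and_min_general δ hFG hsub hDCC hpos b x hx hxb
end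

section
/- Let L, compactness, the condition (FG), and the submodular function δ be as in the context. If a ≤ b ≤ c in L, a is strong in b, and b is strong in c, then a is strong in c (strongness is transitive). -/
open CompleteLattice

/-- The join of two compact elements is compact. -/
theorem sup_compact_le_isCompactElement {L : Type*} [CompleteLattice L] {x y : L}
    (hx : IsCompactElement x) (hy : IsCompactElement y) : IsCompactElement (x ⊔ y) := by
  classical
  have h := CompleteLattice.isCompactElement_finsetSup (α := L) (f := id) {x, y} ?_
  · simpa using h
  · intro z hz
    rcases Finset.mem_insert.mp hz with rfl | hz
    · exact hx
    · simpa using Finset.mem_singleton.mp hz ▸ hy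

/-- Strongness is transitive: if `a ≤ b ≤ c`, `a` is strong in `b` and `b` is strong
in `c`, then `a` is strong in `c`. -/
theorem isStrong_trans {L : Type*} [CompleteLattice L] (δ : L → ℤ)
    (hFG : ∀ x c : L, IsCompactElement c → x ≤ c → IsCompactElement x)
    (hbot : δ ⊥ = 0)
    (hsub : ∀ x y : L, IsCompactElement x → IsCompactElement y →
      δ (x ⊔ y) + δ (x ⊓ y) ≤ δ x + δ y)
    (a b c : L) (hab : a ≤ b) (hbc : b ≤ c)
    (h₁ : IsStrong δ a b) (h₂ : IsStrong δ b c) :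
    IsStrong δ a c := by
  intro x hx hxc y hy hya
  -- Step 1: use strongness of `b` in `c` to find `z` with `y ≤ z ≤ b`, `δ z ≤ δ (x ⊔ z)`.
  obtain ⟨z, hz, hyz, hzb, hδz⟩ := h₂ x hx hxc y hy (hya.trans hab)
  -- Step 2: let `w = (x ⊔ y) ⊓ z`; it is compact and `y ≤ w ≤ b`, with `δ w ≤ δ (x ⊔ y)`.
  set w := (x ⊔ y) ⊓ z with hw_def
  have hxy : IsCompactElement (x ⊔ y) := sup_compact_le_isCompactElement hx hy
  have hw : IsCompactElement w := hFG w (x ⊔ y) hxy inf_le_left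
  have hyw : y ≤ w := le_inf le_sup_right hyz
  have hwb : w ≤ b := inf_le_right.trans hzb
  have hsub1 := hsub (x ⊔ y) z hxy hz
  have hsupz : (x ⊔ y) ⊔ z = x ⊔ z := by
    rw [sup_assoc]
    exact congrArg (x ⊔ ·) (sup_eq_right.mpr hyz)
  rw [hsupz, ← hw_def] at hsub1
  have hδw : δ w ≤ δ (x ⊔ y) := by omega
  -- Step 3: use strongness of `a` in `b` with `w` to get `y''` with `y ≤ y'' ≤ a`,
  -- `δ y'' ≤ δ (w ⊔ y'')`.
  obtain ⟨y'', hy'', hyy'', hy''a, hδy''⟩ := h₁ w hw hwb y hy hya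
  -- Step 4: let `v = w ⊓ y''`; then `y ≤ v ≤ a`, `v` compact, `δ v ≤ δ w`, and `x ⊔ v = x ⊔ y`.
  refine ⟨w ⊓ y'', hFG _ w hw inf_le_left, le_inf hyw hyy'', inf_le_right.trans hy''a, ?_⟩
  have hsub2 := hsub w y'' hw hy''
  have hδv : δ (w ⊓ y'') ≤ δ (x ⊔ y) := by omega
  have hxv : x ⊔ (w ⊓ y'') = x ⊔ y := by
    apply le_antisymm
    · exact sup_le le_sup_left ((inf_le_left.trans inf_le_left))
    · exact sup_le le_sup_left ((le_inf hyw hyy'').trans le_sup_right)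
  rw [hxv]
  exact hδv
end
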